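/- arXiv:2508.20837 — 3 statements merged into one kernel-verified Lean document; each statement's English description precedes it below -/
import Mathlib

section
/- The function f(x) = (δ - x)/(2G) is the unique bounded solution on [0,δ] of the ODE 2G f'(x) + (α²x²/2) f''(x) = -1 with boundary condition f(δ)=0; in particular f(0) = δ/(2G). -/
open Set Filter Topology

lemma aux_unbdd (k δC M : ℝ) (hk : 0 < k) (hδ : 0 < δC) (C : ℝ) (hC : 0 < C)
    (h : ℝ → ℝ)
    (hderiv : ∀ x ∈ Ioo (0:ℝ) δC, HasDerivAt h (C * Real.exp (k / x)) x)
    (hM : ∀ x ∈ Ioo (0:ℝ) δC, |h x| ≤ M) : False := by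
  -- q x = h x - C k log x is monotone on Ioo 0 δC
  set q : ℝ → ℝ := fun x => h x - C * k * Real.log x with hq
  have hqderiv : ∀ x ∈ Ioo (0:ℝ) δC,
      HasDerivAt q (C * Real.exp (k / x) - C * k / x) x := by
    intro x hx
    have hx0 : x ≠ 0 := ne_of_gt hx.1
    have h1 : HasDerivAt (fun x => C * k * Real.log x) (C * k / x) x := by
      simpa [mul_div_assoc, div_eq_mul_inv] using (Real.hasDerivAt_log hx0).const_mul (C * k)
    simpa [hq, Pi.sub_def] using (hderiv x hx).sub h1
  have hmono : MonotoneOn q (Ioo (0:ℝ) δC) := by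
    apply monotoneOn_of_hasDerivWithinAt_nonneg (convex_Ioo _ _)
      (f' := fun x => C * Real.exp (k / x) - C * k / x)
    · intro x hx
      exact (hqderiv x hx).continuousAt.continuousWithinAt
    · intro x hx
      rw [interior_Ioo] at hx
      exact (hqderiv x hx).hasDerivWithinAt
    · intro x hx
      rw [interior_Ioo] at hx
      have hx0 : 0 < x := hx.1
      have : k / x ≤ Real.exp (k / x) := (Real.add_one_le_exp _).trans' (by linarith)
      have h2 : C * (k / x) ≤ C * Real.exp (k / x) := by
        exact mul_le_mul_of_nonneg_left this hC.le
      rw [sub_nonneg]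
      calc C * k / x = C * (k / x) := by ring
      _ ≤ _ := h2
  -- evaluate
  set y := δC / 2 with hy
  have hyI : y ∈ Ioo (0:ℝ) δC := ⟨by positivity, by simp [hy]; linarith⟩
  set D := h y - C * k * Real.log y with hD
  set x := min (δC / 4) (Real.exp (-(M + |D| + 1) / (C * k))) with hxdef
  have hx0 : 0 < x := lt_min (by linarith) (Real.exp_pos _)
  have hxI : x ∈ Ioo (0:ℝ) δC := ⟨hx0, (min_le_left _ _).trans_lt (by linarith)⟩
  have hxy : x ≤ y := (min_le_left _ _).trans (by rw [hy]; linarith)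
  have hqle : q x ≤ q y := hmono hxI hyI hxy
  have hlog : Real.log x ≤ -(M + |D| + 1) / (C * k) := by
    calc Real.log x ≤ Real.log (Real.exp (-(M + |D| + 1) / (C * k))) :=
      Real.log_le_log hx0 (min_le_right _ _)
    _ = _ := Real.log_exp _
  have hCk : 0 < C * k := mul_pos hC hk
  have hmul : C * k * Real.log x ≤ -(M + |D| + 1) := by
    have := mul_le_mul_of_nonneg_left hlog hCk.le
    rwa [mul_div_cancel₀ _ (ne_of_gt hCk)] at this
  have hhx : h x ≤ -(M + |D| + 1) + D := by
    have : h x - C * k * Real.log x ≤ D := hqle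
    linarith
  have hDle : D ≤ |D| := le_abs_self D
  have : h x < -M := by linarith
  have := hM x hxI
  have := abs_le.1 this
  linarith [this.1]

lemma deriv_f_eq (G δ : ℝ) :
    deriv (fun y : ℝ => (δ - y)/(2*G)) = fun _ => -(1/(2*G)) := by
  funext x
  have h : HasDerivAt (fun y : ℝ => (δ - y)/(2*G)) (-(1/(2*G))) x := by
    have : HasDerivAt (fun y : ℝ => δ - y) (-1) x := by
      simpa using (hasDerivAt_id x).const_sub δ
    simpa [neg_div] using this.div_const (2*G)
  exact h.deriv

lemma uniq (G α δ : ℝ) (hG : 0 < G) (hα : 0 < α) (hδ : 0 < δ)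
    (g g' g'' : ℝ → ℝ)
    (hg : ∀ x ∈ Ioo (0:ℝ) δ, HasDerivAt g (g' x) x)
    (hg' : ∀ x ∈ Ioo (0:ℝ) δ, HasDerivAt g' (g'' x) x)
    (hgc : ContinuousOn g (Icc 0 δ))
    (hode : ∀ x ∈ Ioo (0:ℝ) δ, 2*G * g' x + (α^2 * x^2 / 2) * g'' x = -1)
    (hgδ : g δ = 0)
    (hbdd : ∃ M : ℝ, ∀ x ∈ Icc (0:ℝ) δ, |g x| ≤ M) :
    ∀ x ∈ Icc (0:ℝ) δ, g x = (δ - x)/(2*G) := by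
  obtain ⟨M, hM⟩ := hbdd
  set k : ℝ := 4*G/α^2 with hkdef
  have hk : 0 < k := by positivity
  set u : ℝ → ℝ := fun x => g' x + 1/(2*G) with hu
  set w : ℝ → ℝ := fun x => u x * Real.exp (-(k/x)) with hw
  set h : ℝ → ℝ := fun x => g x - (δ - x)/(2*G) with hh
  -- key algebraic identity
  have hE : ∀ x ∈ Ioo (0:ℝ) δ, g'' x + (k/x^2) * u x = 0 := by
    intro x hx
    have h1 := hode x hx
    have hx0 : x ≠ 0 := ne_of_gt hx.1
    have hα0 : α ≠ 0 := ne_of_gt hα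
    have hG0 : G ≠ 0 := ne_of_gt hG
    simp only [hu, hkdef]
    field_simp
    nlinarith [h1, sq_nonneg x, sq_nonneg α]
  -- w has zero derivative on Ioo
  have hphi : ∀ x ∈ Ioo (0:ℝ) δ,
      HasDerivAt (fun x => Real.exp (-(k/x))) (Real.exp (-(k/x)) * (k/x^2)) x := by
    intro x hx
    have hx0 : x ≠ 0 := ne_of_gt hx.1
    have h2 : HasDerivAt (fun x : ℝ => -(k/x)) (k/x^2) x := by
      have : HasDerivAt (fun x : ℝ => k/x) (-(k/x^2)) x := by
        simpa [div_eq_mul_inv, sq] using ((hasDerivAt_inv hx0).const_mul k)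
      simpa [Pi.neg_def] using this.neg
    simpa [mul_comm, Function.comp_def] using (Real.hasDerivAt_exp (-(k/x))).comp x h2
  have hw' : ∀ x ∈ Ioo (0:ℝ) δ, HasDerivAt w 0 x := by
    intro x hx
    have hux : HasDerivAt u (g'' x) x := by
      simpa [hu] using (hg' x hx).add_const (1/(2*G))
    have := hux.mul (hphi x hx)
    have heq : g'' x * Real.exp (-(k/x)) + u x * (Real.exp (-(k/x)) * (k/x^2)) = 0 := by
      have := hE x hx
      nlinarith [this, Real.exp_pos (-(k/x))]
    simpa [hw, heq, Pi.mul_def] using this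
  -- w is constant on Ioo
  have hwc : ∀ x ∈ Ioo (0:ℝ) δ, ∀ y ∈ Ioo (0:ℝ) δ, x ≤ y → w x = w y := by
    intro x hx y hy hxy
    have hmono : MonotoneOn w (Ioo (0:ℝ) δ) := by
      apply monotoneOn_of_hasDerivWithinAt_nonneg (convex_Ioo _ _) (f' := fun _ => (0:ℝ))
      · exact fun t ht => (hw' t ht).continuousAt.continuousWithinAt
      · intro t ht; rw [interior_Ioo] at ht; exact (hw' t ht).hasDerivWithinAt
      · intro t _; exact le_refl 0
    have hanti : AntitoneOn w (Ioo (0:ℝ) δ) := by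
      apply antitoneOn_of_hasDerivWithinAt_nonpos (convex_Ioo _ _) (f' := fun _ => (0:ℝ))
      · exact fun t ht => (hw' t ht).continuousAt.continuousWithinAt
      · intro t ht; rw [interior_Ioo] at ht; exact (hw' t ht).hasDerivWithinAt
      · intro t _; exact le_refl 0
    exact le_antisymm (hmono hx hy hxy) (hanti hx hy hxy)
  have hmid : δ/2 ∈ Ioo (0:ℝ) δ := ⟨by linarith, by linarith⟩
  set C : ℝ := w (δ/2) with hC
  have hwC : ∀ x ∈ Ioo (0:ℝ) δ, w x = C := by
    intro x hx
    rcases le_total x (δ/2) with hle | hle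
    · exact hwc x hx _ hmid hle
    · exact (hwc _ hmid x hx hle).symm
  have huC : ∀ x ∈ Ioo (0:ℝ) δ, u x = C * Real.exp (k/x) := by
    intro x hx
    have h1 : u x * Real.exp (-(k/x)) = C := hwC x hx
    have h3 : Real.exp (-(k/x)) * Real.exp (k/x) = 1 := by
      rw [← Real.exp_add]; simp
    calc u x = u x * (Real.exp (-(k/x)) * Real.exp (k/x)) := by rw [h3, mul_one]
    _ = (u x * Real.exp (-(k/x))) * Real.exp (k/x) := by ring
    _ = C * Real.exp (k/x) := by rw [h1]
  -- h has derivative u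
  have hhderiv : ∀ x ∈ Ioo (0:ℝ) δ, HasDerivAt h (u x) x := by
    intro x hx
    have hf : HasDerivAt (fun y : ℝ => (δ - y)/(2*G)) (-(1/(2*G))) x := by
      have : HasDerivAt (fun y : ℝ => δ - y) (-1) x := by
        simpa using (hasDerivAt_id x).const_sub δ
      simpa [neg_div] using this.div_const (2*G)
    have := (hg x hx).sub hf
    simpa [hh, hu, Pi.sub_def] using this
  -- bound on h
  have hhM : ∀ x ∈ Ioo (0:ℝ) δ, |h x| ≤ M + δ/(2*G) := by
    intro x hx
    have hxI : x ∈ Icc (0:ℝ) δ := ⟨hx.1.le, hx.2.le⟩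
    have h1 : |g x| ≤ M := hM x hxI
    have h2 : |(δ - x)/(2*G)| ≤ δ/(2*G) := by
      rw [abs_div, abs_of_nonneg (by linarith [hx.2] : (0:ℝ) ≤ δ - x),
        abs_of_nonneg (by positivity : (0:ℝ) ≤ 2*G)]
      gcongr
      linarith [hx.1]
    calc |h x| = |g x - (δ - x)/(2*G)| := rfl
    _ ≤ |g x| + |(δ - x)/(2*G)| := abs_sub _ _
    _ ≤ M + δ/(2*G) := add_le_add h1 h2
  -- trichotomy on C
  rcases lt_trichotomy C 0 with hC0 | hC0 | hC0
  · exfalso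
    apply aux_unbdd k δ (M + δ/(2*G)) hk hδ (-C) (by linarith) (fun x => -(h x))
    · intro x hx
      have := (hhderiv x hx).neg
      rw [huC x hx] at this
      simpa [neg_mul, Pi.neg_def] using this
    · intro x hx
      simpa using hhM x hx
  · -- C = 0 : u ≡ 0 on Ioo, h constant
    have hu0 : ∀ x ∈ Ioo (0:ℝ) δ, u x = 0 := by
      intro x hx; rw [huC x hx, hC0, zero_mul]
    have hhc : ContinuousOn h (Icc (0:ℝ) δ) := by
      apply hgc.sub
      exact (continuous_const.sub continuous_id').div_const (2*G) |>.continuousOn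
    have hhδ : h δ = 0 := by simp [hh, hgδ]
    have hIoc : ∀ x ∈ Ioc (0:ℝ) δ, h x = 0 := by
      intro x hx
      have hsub : Icc x δ ⊆ Icc (0:ℝ) δ := Icc_subset_Icc hx.1.le le_rfl
      have hconst := constant_of_has_deriv_right_zero (f := h) (a := x) (b := δ)
        (hhc.mono hsub) ?_
      · have := hconst δ ⟨hx.2, le_rfl⟩
        rw [hhδ] at this
        linarith [this]
      · intro t ht
        have htI : t ∈ Ioo (0:ℝ) δ := ⟨lt_of_lt_of_le hx.1 ht.1, ht.2⟩
        have := (hhderiv t htI).hasDerivWithinAt (s := Ici t)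
        rwa [hu0 t htI] at this
    have hh0 : h 0 = 0 := by
      have hne : (𝓝[Ioc (0:ℝ) δ] 0).NeBot := by
        rw [← mem_closure_iff_nhdsWithin_neBot, closure_Ioc (ne_of_lt hδ)]
        exact ⟨le_rfl, hδ.le⟩
      have ht1 : Tendsto h (𝓝[Ioc (0:ℝ) δ] 0) (𝓝 (h 0)) := by
        have := (hhc 0 ⟨le_rfl, hδ.le⟩)
        exact this.tendsto.mono_left (nhdsWithin_mono _ Ioc_subset_Icc_self)
      have ht2 : Tendsto h (𝓝[Ioc (0:ℝ) δ] 0) (𝓝 0) := by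
        apply Tendsto.congr' ?_ tendsto_const_nhds
        filter_upwards [self_mem_nhdsWithin] with t ht
        exact (hIoc t ht).symm
      exact tendsto_nhds_unique ht1 ht2
    intro x hx
    have hhx : h x = 0 := by
      rcases eq_or_lt_of_le hx.1 with h0 | h0
      · rw [← h0]; exact hh0
      · exact hIoc x ⟨h0, hx.2⟩
    have := hhx
    rw [hh] at this
    simp only at this
    linarith [this]
  · exfalso
    apply aux_unbdd k δ (M + δ/(2*G)) hk hδ C hC0 h
    · intro x hx
      have := hhderiv x hx
      rwa [huC x hx] at this
    · exact hhM

/-- f(x) = (δ-x)/(2G) is the unique bounded solution on [0,δ] of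
2G f' + (α²x²/2) f'' = -1 with f(δ)=0; in particular f(0) = δ/(2G). -/
theorem stmt4 (G α δ : ℝ) (hG : 0 < G) (hα : 0 < α) (hδ : 0 < δ) :
    (∀ x ∈ Icc (0:ℝ) δ,
      2*G * deriv (fun y => (δ - y)/(2*G)) x
        + (α^2 * x^2 / 2) * deriv (deriv (fun y => (δ - y)/(2*G))) x = -1) ∧
    ((δ - δ)/(2*G) = 0) ∧
    ((δ - 0)/(2*G) = δ/(2*G)) ∧
    (∀ g g' g'' : ℝ → ℝ,
      (∀ x ∈ Ioo (0:ℝ) δ, HasDerivAt g (g' x) x) →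
      (∀ x ∈ Ioo (0:ℝ) δ, HasDerivAt g' (g'' x) x) →
      ContinuousOn g (Icc 0 δ) →
      (∀ x ∈ Ioo (0:ℝ) δ, 2*G * g' x + (α^2 * x^2 / 2) * g'' x = -1) →
      g δ = 0 →
      (∃ M : ℝ, ∀ x ∈ Icc (0:ℝ) δ, |g x| ≤ M) →
      ∀ x ∈ Icc (0:ℝ) δ, g x = (δ - x)/(2*G)) := by
  refine ⟨?_, by simp, by simp, ?_⟩
  · intro x _
    rw [deriv_f_eq G δ]
    simp [deriv_const]
    field_simp
  · intro g g' g'' hg hg' hgc hode hgδ hbdd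
    exact uniq G α δ hG hα hδ g g' g'' hg hg' hgc hode hgδ hbdd
end

section
/- The function f(x) = T(x - 2 + δ)/2 is the unique bounded solution on [2-δ,2] of the ODE -(2/T) f'(x) + 2α²(x-2)² f''(x) = -1 with boundary condition f(2-δ)=0; in particular f(2) = Tδ/2. -/
open Set Filter Topology

lemma aux_contra (A M c T δ : ℝ) (hA : 0 < A) (hM : 0 ≤ M) (hc : 0 < c)
    (hT : 0 < T) (hδ : 0 < δ)
    (hbound : ∀ s : ℝ, 0 < s → s < δ → c * Real.exp ((A*s)⁻¹) ≤ T/2 + 4*M/s) : False := by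
  obtain ⟨s₀, hs₀pos, hs₀δ, hs₀1, hs₀C⟩ :
      ∃ s : ℝ, 0 < s ∧ s < δ ∧ s ≤ 1 ∧ s * (4*A^2*(4*M+T/2+1)) ≤ c := by
    have hD : 0 < 4*A^2*(4*M+T/2+1) := by positivity
    refine ⟨min (δ/2) (min 1 (c/(4*A^2*(4*M+T/2+1)))), ?_, ?_, ?_, ?_⟩
    · exact lt_min (by linarith) (lt_min one_pos (by positivity))
    · exact lt_of_le_of_lt (min_le_left _ _) (by linarith)
    · exact le_trans (min_le_right _ _) (min_le_left _ _)
    · have h := le_trans (min_le_right (δ/2) _) (min_le_right 1 (c/(4*A^2*(4*M+T/2+1))))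
      exact (le_div_iff₀ hD).mp h
  have hb := hbound s₀ hs₀pos hs₀δ
  have htpos : 0 < (A*s₀)⁻¹ := by positivity
  set t : ℝ := (A*s₀)⁻¹ with ht
  have hexp2 : t^2/4 ≤ Real.exp t := by
    have h := Real.add_one_le_exp (t/2)
    have h2 : Real.exp t = Real.exp (t/2) * Real.exp (t/2) := by
      rw [← Real.exp_add]; norm_num
    nlinarith [Real.exp_pos (t/2), htpos]
  have hq : c * (t^2/4) ≤ T/2 + 4*M/s₀ :=
    le_trans (mul_le_mul_of_nonneg_left hexp2 hc.le) hb
  have hq2 := mul_le_mul_of_nonneg_right hq (sq_nonneg s₀)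
  have hts : t * s₀ = A⁻¹ := by
    rw [ht]; field_simp
  have hL : c * (t^2/4) * s₀^2 = c * (A⁻¹)^2/4 := by
    rw [show c * (t^2/4) * s₀^2 = c * (t*s₀)^2/4 by ring, hts]
  have hR : (T/2 + 4*M/s₀) * s₀^2 = T/2*s₀^2 + 4*M*s₀ := by
    field_simp
  rw [hL, hR] at hq2
  have hq3 := mul_le_mul_of_nonneg_right hq2 (sq_nonneg A)
  have hL2 : c * (A⁻¹)^2/4 * A^2 = c/4 := by
    field_simp
  rw [hL2] at hq3
  have hss : s₀^2 ≤ s₀ := by nlinarith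
  have hP2 : (0:ℝ) < A^2 := by positivity
  have f1 : c ≤ (2*T + 16*M) * (s₀*A^2) := by
    nlinarith [mul_le_mul_of_nonneg_right hss hP2.le]
  have f2 : (16*M + 2*T + 4) * (s₀*A^2) ≤ c := by nlinarith [hs₀C]
  have hz : 0 < s₀ * A^2 := mul_pos hs₀pos hP2
  linarith

/-- f(x) = T(x-2+δ)/2 is the unique bounded solution on [2-δ,2] of
-(2/T) f' + 2α²(x-2)² f'' = -1 with f(2-δ)=0; in particular f(2) = Tδ/2. -/
theorem stmt5 (T α δ : ℝ) (hT : 0 < T) (hα : 0 < α) (hδ : 0 < δ) (hδ2 : δ < 2) :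
    (∀ x ∈ Icc (2 - δ) (2:ℝ),
      -(2/T) * deriv (fun y => T*(y - 2 + δ)/2) x
        + 2*α^2*(x - 2)^2 * deriv (deriv (fun y => T*(y - 2 + δ)/2)) x = -1) ∧
    (T*((2 - δ) - 2 + δ)/2 = 0) ∧
    (T*((2:ℝ) - 2 + δ)/2 = T*δ/2) ∧
    (∀ g g' g'' : ℝ → ℝ,
      (∀ x ∈ Ioo (2 - δ) (2:ℝ), HasDerivAt g (g' x) x) →
      (∀ x ∈ Ioo (2 - δ) (2:ℝ), HasDerivAt g' (g'' x) x) →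
      ContinuousOn g (Icc (2 - δ) 2) →
      (∀ x ∈ Ioo (2 - δ) (2:ℝ), -(2/T) * g' x + 2*α^2*(x - 2)^2 * g'' x = -1) →
      g (2 - δ) = 0 →
      (∃ M : ℝ, ∀ x ∈ Icc (2 - δ) (2:ℝ), |g x| ≤ M) →
      ∀ x ∈ Icc (2 - δ) (2:ℝ), g x = T*(x - 2 + δ)/2) := by
  have hT' : T ≠ 0 := ne_of_gt hT
  have hab : 2 - δ < 2 := by linarith
  have hderiv1 : deriv (fun y : ℝ => T*(y - 2 + δ)/2) = fun _ => T/2 := by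
    funext x
    have h : HasDerivAt (fun y : ℝ => T*(y - 2 + δ)/2) (T/2) x := by
      simpa using ((((hasDerivAt_id x).sub_const 2).add_const δ).const_mul T).div_const 2
    exact h.deriv
  refine ⟨?_, by ring, by ring, ?_⟩
  · intro x _
    rw [hderiv1]
    simp only [deriv_const']
    rw [mul_zero, add_zero]
    field_simp
  rintro g g' g'' hg hg' hcont hode hg0 ⟨M, hM⟩
  have hA : (0:ℝ) < T*α^2 := by positivity
  -- u := (g' - T/2) * exp(1/(Tα²(x-2))) has zero derivative on Ioo
  set u : ℝ → ℝ := fun y => (g' y - T/2) * Real.exp ((T*α^2*(y-2))⁻¹) with hu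
  have hud : ∀ x ∈ Ioo (2-δ) (2:ℝ), HasDerivAt u 0 x := by
    intro x hx
    have hx2 : x - 2 ≠ 0 := ne_of_lt (by linarith [hx.2])
    have hne : T*α^2*(x-2) ≠ 0 := mul_ne_zero hA.ne' hx2
    have h1 := hode x hx
    have key : g' x - T/2 = g'' x * (T*α^2*(x-2)^2) := by
      field_simp at h1; nlinarith [h1]
    have hlin : HasDerivAt (fun y : ℝ => T*α^2*(y-2)) (T*α^2) x := by
      simpa using ((hasDerivAt_id x).sub_const 2).const_mul (T*α^2)
    have hexp := (hlin.inv hne).exp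
    have hprod := ((hg' x hx).sub_const (T/2)).mul hexp
    have hval : g'' x * Real.exp ((T*α^2*(x-2))⁻¹)
        + (g' x - T/2) * (Real.exp ((T*α^2*(x-2))⁻¹) * (-(T*α^2) / (T*α^2*(x-2))^2)) = 0 := by
      rw [key]; field_simp; ring
    rw [hu, ← hval]
    exact hprod
  -- u is constant on Ioo
  have hconst : ∀ x ∈ Ioo (2-δ) (2:ℝ), ∀ y ∈ Ioo (2-δ) (2:ℝ), x ≤ y → u x = u y := by
    intro x hx y hy hxy
    rcases eq_or_lt_of_le hxy with rfl | hlt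
    · rfl
    have hsub : Icc x y ⊆ Ioo (2-δ) 2 :=
      fun z hz => ⟨lt_of_lt_of_le hx.1 hz.1, lt_of_le_of_lt hz.2 hy.2⟩
    have hcu : ContinuousOn u (Icc x y) :=
      fun z hz => ((hud z (hsub hz)).continuousAt).continuousWithinAt
    obtain ⟨c, _, hceq⟩ := exists_hasDerivAt_eq_slope u (fun _ => 0) hlt hcu
      (fun z hz => hud z (hsub ⟨le_of_lt hz.1, le_of_lt hz.2⟩))
    have h2 := hceq.symm
    have hxy' : y - x ≠ 0 := sub_ne_zero.mpr (ne_of_gt hlt)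
    field_simp [hxy'] at h2
    linarith
  obtain ⟨C, hC⟩ : ∃ C : ℝ, ∀ x ∈ Ioo (2-δ) (2:ℝ), u x = C := by
    have hmI : (2 - δ/2 : ℝ) ∈ Ioo (2-δ) (2:ℝ) := ⟨by linarith, by linarith⟩
    refine ⟨u (2 - δ/2), fun x hx => ?_⟩
    rcases le_total x (2 - δ/2) with h | h
    · exact hconst x hx _ hmI h
    · exact (hconst _ hmI x hx h).symm
  -- formula for g'
  have hg'eq : ∀ x ∈ Ioo (2-δ) (2:ℝ),
      g' x - T/2 = C * Real.exp ((T*α^2*(2-x))⁻¹) := by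
    intro x hx
    have h : (g' x - T/2) * Real.exp ((T*α^2*(x-2))⁻¹) = C := hC x hx
    have hE : Real.exp ((T*α^2*(x-2))⁻¹) ≠ 0 := Real.exp_ne_zero _
    have hrw : (T*α^2*(2-x))⁻¹ = -(T*α^2*(x-2))⁻¹ := by
      rw [show T*α^2*(2-x) = -(T*α^2*(x-2)) by ring, inv_neg]
    have h2 : g' x - T/2 = C * (Real.exp ((T*α^2*(x-2))⁻¹))⁻¹ := by
      rw [eq_comm, mul_inv_eq_iff_eq_mul₀ hE, eq_comm, mul_comm]
      rw [mul_comm] at h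
      exact h
    rw [hrw, Real.exp_neg]
    exact h2
  -- the constant is zero
  have hM0 : 0 ≤ M := le_trans (abs_nonneg _) (hM (2-δ) ⟨le_refl _, by linarith⟩)
  have hC0 : C = 0 := by
    by_contra hC0
    have hCpos : 0 < |C| := abs_pos.mpr hC0
    refine aux_contra (T*α^2) M |C| T δ hA hM0 hCpos hT hδ ?_
    intro s hs hsδ
    have hyx : (2:ℝ) - s < 2 - s/2 := by linarith
    have hyI : (2:ℝ) - s ∈ Ioo (2-δ) 2 := ⟨by linarith, by linarith⟩
    have hxI : (2:ℝ) - s/2 ∈ Ioo (2-δ) 2 := ⟨by linarith, by linarith⟩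
    have hsub : Icc (2-s) (2-s/2) ⊆ Icc (2-δ) 2 :=
      fun z hz => ⟨le_trans (by linarith : 2-δ ≤ 2-s) hz.1, le_trans hz.2 (by linarith)⟩
    obtain ⟨ξ, hξ, hslope⟩ := exists_hasDerivAt_eq_slope g g' hyx (hcont.mono hsub)
      (fun z hz => hg z ⟨lt_trans hyI.1 hz.1, lt_trans hz.2 hxI.2⟩)
    have hξI : ξ ∈ Ioo (2-δ) (2:ℝ) := ⟨lt_trans hyI.1 hξ.1, lt_trans hξ.2 hxI.2⟩
    have hform := hg'eq ξ hξI
    have hgx := hM (2-s/2) ⟨le_of_lt hxI.1, le_of_lt hxI.2⟩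
    have hgy := hM (2-s) ⟨le_of_lt hyI.1, le_of_lt hyI.2⟩
    have hdiff : |g (2-s/2) - g (2-s)| ≤ 2*M := by
      calc |g (2-s/2) - g (2-s)| ≤ |g (2-s/2)| + |g (2-s)| := abs_sub _ _
        _ ≤ 2*M := by linarith
    have hden : (2:ℝ) - s/2 - (2 - s) = s/2 := by ring
    have hgb : |g' ξ| ≤ 4*M/s := by
      rw [hslope, hden, abs_div, abs_of_pos (by linarith : (0:ℝ) < s/2)]
      rw [div_le_div_iff₀ (by linarith) hs]
      calc |g (2-s/2) - g (2-s)| * s ≤ 2*M*s :=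
            mul_le_mul_of_nonneg_right hdiff hs.le
        _ = 4*M*(s/2) := by ring
    have h2ξ : 0 < 2 - ξ := by linarith [hξI.2]
    have h2ξs : 2 - ξ ≤ s := by linarith [hξ.1]
    have hexple : (T*α^2*s)⁻¹ ≤ (T*α^2*(2-ξ))⁻¹ := by
      apply inv_anti₀ (by positivity)
      exact mul_le_mul_of_nonneg_left h2ξs hA.le
    have hCE : |C| * Real.exp ((T*α^2*s)⁻¹) ≤ |g' ξ - T/2| := by
      rw [hform, abs_mul, Real.abs_exp]
      exact mul_le_mul_of_nonneg_left (Real.exp_le_exp.mpr hexple) (abs_nonneg C)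
    have htri : |g' ξ - T/2| ≤ |g' ξ| + T/2 := by
      have h1 : |g' ξ - T/2| ≤ |g' ξ| + |T/2| := abs_sub _ _
      have h2 : |T/2| = T/2 := abs_of_pos (by linarith)
      linarith [h1, h2.le]
    linarith
  -- hence g' = T/2 on Ioo
  have hg'T : ∀ x ∈ Ioo (2-δ) (2:ℝ), g' x = T/2 := by
    intro x hx
    have h := hg'eq x hx
    rw [hC0, zero_mul] at h
    linarith
  -- g x = g y + T/2 (x - y) for interior points, take limit y → 2-δ
  have hgeq : ∀ x ∈ Ioo (2-δ) (2:ℝ), g x = T*(x-2+δ)/2 := by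
    intro x hx
    have hstep : ∀ y ∈ Ioo (2-δ) x, g x = g y + T/2*(x - y) := by
      intro y hy
      have hsub : Icc y x ⊆ Icc (2-δ) 2 :=
        fun z hz => ⟨le_trans (le_of_lt hy.1) hz.1, le_trans hz.2 (le_of_lt hx.2)⟩
      obtain ⟨ξ, hξ, hslope⟩ := exists_hasDerivAt_eq_slope g g' hy.2 (hcont.mono hsub)
        (fun z hz => hg z ⟨lt_trans hy.1 hz.1, lt_trans hz.2 hx.2⟩)
      have hξI : ξ ∈ Ioo (2-δ) (2:ℝ) := ⟨lt_trans hy.1 hξ.1, lt_trans hξ.2 hx.2⟩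
      rw [hg'T ξ hξI] at hslope
      have hxy : x - y ≠ 0 := sub_ne_zero.mpr (ne_of_gt hy.2)
      field_simp [hxy] at hslope
      linarith
    have hmem : Ioo (2-δ) x ∈ 𝓝[>] (2-δ) := Ioo_mem_nhdsGT_of_mem ⟨le_refl _, hx.1⟩
    have htg : Tendsto g (𝓝[>] (2-δ)) (𝓝 0) := by
      have h0 : Tendsto g (𝓝[Icc (2-δ) 2] (2-δ)) (𝓝 (g (2-δ))) :=
        hcont (2-δ) ⟨le_refl _, by linarith⟩
      rw [hg0] at h0
      refine h0.mono_left ?_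
      rw [← nhdsWithin_Ioo_eq_nhdsGT hab]
      exact nhdsWithin_mono _ Ioo_subset_Icc_self
    have h1 : Tendsto (fun y => g y + T/2*(x-y)) (𝓝[>] (2-δ)) (𝓝 (0 + T/2*(x-(2-δ)))) := by
      refine htg.add ?_
      exact ((continuous_const.mul (continuous_const.sub continuous_id)).tendsto (2-δ)).mono_left
        nhdsWithin_le_nhds
    have heq : (fun _ : ℝ => g x) =ᶠ[𝓝[>] (2-δ)] (fun y => g y + T/2*(x-y)) :=
      eventuallyEq_of_mem hmem (fun y hy => hstep y hy)
    have h2 : Tendsto (fun y => g y + T/2*(x-y)) (𝓝[>] (2-δ)) (𝓝 (g x)) :=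
      Tendsto.congr' heq tendsto_const_nhds
    have h3 := tendsto_nhds_unique h2 h1
    rw [h3]; ring
  -- endpoints
  intro x hx
  rcases eq_or_lt_of_le hx.1 with h1 | h1
  · rw [← h1, hg0]; ring
  rcases eq_or_lt_of_le hx.2 with h2 | h2
  · subst h2
    have hg2 : Tendsto g (𝓝[<] (2:ℝ)) (𝓝 (g 2)) := by
      have h0 : Tendsto g (𝓝[Icc (2-δ) 2] (2:ℝ)) (𝓝 (g 2)) := hcont 2 ⟨by linarith, le_refl _⟩
      refine h0.mono_left ?_
      rw [← nhdsWithin_Ioo_eq_nhdsLT hab]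
      exact nhdsWithin_mono _ Ioo_subset_Icc_self
    have hmem : Ioo (2-δ) 2 ∈ 𝓝[<] (2:ℝ) := Ioo_mem_nhdsLT_of_mem ⟨hab, le_refl _⟩
    have heq : g =ᶠ[𝓝[<] (2:ℝ)] (fun y => T*(y-2+δ)/2) :=
      eventuallyEq_of_mem hmem (fun y hy => hgeq y hy)
    have h1' : Tendsto (fun y => T*(y-2+δ)/2) (𝓝[<] (2:ℝ)) (𝓝 (T*((2:ℝ)-2+δ)/2)) :=
      ((continuous_const.mul ((continuous_id.sub continuous_const).add
        continuous_const)).div_const 2).tendsto 2 |>.mono_left nhdsWithin_le_nhds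
    exact tendsto_nhds_unique (hg2.congr' heq) h1'
  · exact hgeq x ⟨h1, h2⟩
end

section
/- For the density ρ(y) = (N/(1-y²)²) exp{(2/α²) ∫₀^y [-(1+q)/T + G(1-q)]/(1-q²)² dq} with G,T,α > 0 and N > 0, the limits of ρ(y) as y → 1⁻ and y → -1⁺ both equal 0; in particular ρ is bounded on (-1,1) and integrable over (-1,1). -/
open MeasureTheory Set Filter Topology

noncomputable def Faux (T G : ℝ) : ℝ → ℝ := fun y =>
  (1/(4*T) - G/4) * Real.log (1-y) - (1/(4*T) - G/4) * Real.log (1+y)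
    - 1/(2*T*(1-y)) - G/(2*(1+y))

lemma hasDerivFaux (T G : ℝ) (hT : 0 < T) (y : ℝ) (hy : y ∈ Ioo (-1:ℝ) 1) :
    HasDerivAt (Faux T G) ((-(1 + y)/T + G*(1 - y)) / (1 - y^2)^2) y := by
  obtain ⟨h1, h2⟩ := hy
  have hp1 : (0:ℝ) < 1 - y := by linarith
  have hp2 : (0:ℝ) < 1 + y := by linarith
  have hy1 : (1:ℝ) - y ≠ 0 := ne_of_gt hp1
  have hy2 : (1:ℝ) + y ≠ 0 := ne_of_gt hp2
  have d1 : HasDerivAt (fun y : ℝ => 1 - y) (-1) y := by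
    simpa using (hasDerivAt_id y).const_sub 1
  have d2 : HasDerivAt (fun y : ℝ => 1 + y) 1 y := by
    simpa using (hasDerivAt_id y).const_add 1
  have l1 : HasDerivAt (fun y : ℝ => Real.log (1-y)) (-1/(1-y)) y := by
    simpa using d1.log hy1
  have l2 : HasDerivAt (fun y : ℝ => Real.log (1+y)) (1/(1+y)) y := by
    simpa [div_eq_mul_inv] using d2.log hy2
  have i1 : HasDerivAt (fun y : ℝ => 1/(2*T*(1-y))) (2*T/(2*T*(1-y))^2) y := by
    have hd : HasDerivAt (fun y : ℝ => 2*T*(1-y)) (2*T*(-1)) y := d1.const_mul (2*T)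
    have h0 : 2*T*(1-y) ≠ 0 := by positivity
    have := hd.inv h0
    convert this using 1
    · rfl
    · rfl
    · ext z; simp [one_div]
    · ring
  have i2 : HasDerivAt (fun y : ℝ => G/(2*(1+y))) (-(G*2)/(2*(1+y))^2) y := by
    have hd : HasDerivAt (fun y : ℝ => 2*(1+y)) (2*1) y := d2.const_mul 2
    have h0 : 2*(1+y) ≠ 0 := by positivity
    have h := (hd.inv h0).const_mul G
    refine h.congr_deriv ?_
    field_simp
  have := (((l1.const_mul (1/(4*T) - G/4)).sub (l2.const_mul (1/(4*T) - G/4))).sub i1).sub i2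
  convert this using 1
  · rfl
  · rfl
  · rfl
  have hT' : (T:ℝ) ≠ 0 := ne_of_gt hT
  have hfac : (1:ℝ) - y^2 = (1-y)*(1+y) := by ring
  rw [hfac]
  field_simp
  ring

lemma key_atBot (A B : ℝ) (hB : 0 < B) :
    Tendsto (fun u : ℝ => A * Real.log u - B/u) (𝓝[>](0:ℝ)) atBot := by
  have h1 : Tendsto (fun u : ℝ => A * (u * Real.log u) - B) (𝓝[>](0:ℝ)) (𝓝 (-B)) := by
    have := (Real.continuous_mul_log.tendsto 0)
    simp at this
    have := (((this.const_mul A).sub_const B).mono_left (nhdsWithin_le_nhds (s := Ioi (0:ℝ))))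
    simpa using this
  have h2 : Tendsto (fun u : ℝ => u⁻¹) (𝓝[>](0:ℝ)) atTop := tendsto_inv_nhdsGT_zero
  have h3 := Filter.Tendsto.neg_mul_atTop (by linarith : -B < 0) h1 h2
  refine h3.congr' ?_
  filter_upwards [self_mem_nhdsWithin] with u (hu : 0 < u)
  field_simp

/-- For ρ(y) = (N/(1-y²)²) exp{(2/α²)∫₀ʸ [-(1+q)/T + G(1-q)]/(1-q²)² dq} with
G,T,α,N > 0, ρ(y) → 0 as y → 1⁻ and as y → -1⁺; in particular ρ is bounded on (-1,1)
and integrable over (-1,1). -/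
theorem stmt12 (T G α N : ℝ) (hT : 0 < T) (hG : 0 < G) (hα : 0 < α) (hN : 0 < N)
    (ρ : ℝ → ℝ)
    (hρ : ∀ y ∈ Ioo (-1:ℝ) 1,
      ρ y = N / (1 - y^2)^2 *
        Real.exp ((2/α^2) * ∫ q in (0:ℝ)..y, (-(1 + q)/T + G*(1 - q)) / (1 - q^2)^2)) :
    Tendsto ρ (𝓝[<] (1:ℝ)) (𝓝 0) ∧
    Tendsto ρ (𝓝[>] (-1:ℝ)) (𝓝 0) ∧
    (∃ M : ℝ, ∀ y ∈ Ioo (-1:ℝ) 1, |ρ y| ≤ M) ∧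
    IntegrableOn ρ (Ioo (-1:ℝ) 1) := by
  have hT' : (T:ℝ) ≠ 0 := ne_of_gt hT
  set k : ℝ := 2/α^2 with hk
  have hkpos : 0 < k := by positivity
  set c : ℝ := 1/(4*T) - G/4 with hc
  set F : ℝ → ℝ := Faux T G with hFdef
  have h0mem : (0:ℝ) ∈ Ioo (-1:ℝ) 1 := by norm_num
  -- FTC
  have hFTC : ∀ y ∈ Ioo (-1:ℝ) 1,
      (∫ q in (0:ℝ)..y, (-(1 + q)/T + G*(1 - q)) / (1 - q^2)^2) = F y - F 0 := by
    intro y hy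
    have hsub : uIcc (0:ℝ) y ⊆ Ioo (-1:ℝ) 1 :=
      Set.ordConnected_Ioo.uIcc_subset h0mem hy
    refine intervalIntegral.integral_eq_sub_of_hasDerivAt
      (fun t ht => hasDerivFaux T G hT t (hsub ht)) ?_
    apply ContinuousOn.intervalIntegrable
    apply ContinuousOn.div
    · fun_prop
    · fun_prop
    · intro q hq
      obtain ⟨hq1, hq2⟩ := hsub hq
      have : (0:ℝ) < 1 - q^2 := by nlinarith
      positivity
  set C : ℝ := N * Real.exp (-(k * F 0)) with hC
  set E : ℝ → ℝ := fun y => k * F y - Real.log ((1-y^2)^2) with hE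
  -- rewriting of ρ
  have hrho : ∀ y ∈ Ioo (-1:ℝ) 1, ρ y = C * Real.exp (E y) := by
    intro y hy
    obtain ⟨h1, h2⟩ := hy
    have hsq0 : (0:ℝ) < 1 - y^2 := by nlinarith
    have hsq : (0:ℝ) < (1-y^2)^2 := by positivity
    rw [hρ y ⟨h1, h2⟩, hFTC y ⟨h1, h2⟩, hE, hC]
    simp only [Real.exp_sub, Real.exp_neg, Real.exp_log hsq]
    rw [mul_sub]
    rw [Real.exp_sub]
    have := Real.exp_ne_zero (k * F 0)
    field_simp
  -- the exponent splits
  have hEsplit : ∀ y ∈ Ioo (-1:ℝ) 1, E y =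
      ((k*c - 2) * Real.log (1-y) - (k/(2*T))/(1-y))
      + ((-(k*c) - 2) * Real.log (1+y) - (k*G/2)/(1+y)) := by
    intro y hy
    obtain ⟨h1, h2⟩ := hy
    have hp1 : (0:ℝ) < 1 - y := by linarith
    have hp2 : (0:ℝ) < 1 + y := by linarith
    have hlog : Real.log ((1-y^2)^2) = 2 * Real.log (1-y) + 2 * Real.log (1+y) := by
      have hfac : (1:ℝ) - y^2 = (1-y)*(1+y) := by ring
      rw [hfac, Real.log_pow, Real.log_mul (ne_of_gt hp1) (ne_of_gt hp2)]
      ring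
    rw [hE]
    simp only [hlog, hFdef, Faux, hc]
    field_simp
    ring
  -- limit at 1
  have hmap1 : Tendsto (fun y : ℝ => 1 - y) (𝓝[<](1:ℝ)) (𝓝[>](0:ℝ)) := by
    apply tendsto_nhdsWithin_of_tendsto_nhds_of_eventually_within
    · have : Tendsto (fun y : ℝ => 1 - y) (𝓝 1) (𝓝 (1-1)) :=
        (continuous_const.sub continuous_id).tendsto 1
      simpa using this.mono_left nhdsWithin_le_nhds
    · filter_upwards [self_mem_nhdsWithin] with y (hy : y < 1)
      exact sub_pos.mpr hy
  have hmap2 : Tendsto (fun y : ℝ => 1 + y) (𝓝[>](-1:ℝ)) (𝓝[>](0:ℝ)) := by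
    apply tendsto_nhdsWithin_of_tendsto_nhds_of_eventually_within
    · have : Tendsto (fun y : ℝ => 1 + y) (𝓝 (-1)) (𝓝 (1 + -1)) :=
        (continuous_const.add continuous_id).tendsto (-1)
      simpa using this.mono_left nhdsWithin_le_nhds
    · filter_upwards [self_mem_nhdsWithin] with y (hy : -1 < y)
      exact mem_Ioi.mpr (by linarith)
  have hE1 : Tendsto E (𝓝[<](1:ℝ)) atBot := by
    have t1 : Tendsto (fun y : ℝ => (k*c - 2) * Real.log (1-y) - (k/(2*T))/(1-y))
        (𝓝[<](1:ℝ)) atBot :=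
      (key_atBot (k*c-2) (k/(2*T)) (by positivity)).comp hmap1
    have t2 : Tendsto (fun y : ℝ => (-(k*c) - 2) * Real.log (1+y) - (k*G/2)/(1+y))
        (𝓝[<](1:ℝ)) (𝓝 ((-(k*c) - 2) * Real.log (1+1) - (k*G/2)/(1+1))) := by
      apply Tendsto.mono_left ?_ (nhdsWithin_le_nhds (s := Iio (1:ℝ)))
      apply ContinuousAt.tendsto
      have h2 : (1:ℝ) + 1 ≠ 0 := by norm_num
      fun_prop (disch := norm_num)
    have := t1.atBot_add t2
    refine this.congr' ?_
    filter_upwards [Ioo_mem_nhdsLT_of_mem (by norm_num : (1:ℝ) ∈ Ioc (-1:ℝ) 1)]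
      with y hy
    exact (hEsplit y hy).symm
  have hE2 : Tendsto E (𝓝[>](-1:ℝ)) atBot := by
    have t1 : Tendsto (fun y : ℝ => (-(k*c) - 2) * Real.log (1+y) - (k*G/2)/(1+y))
        (𝓝[>](-1:ℝ)) atBot :=
      (key_atBot (-(k*c)-2) (k*G/2) (by positivity)).comp hmap2
    have t2 : Tendsto (fun y : ℝ => (k*c - 2) * Real.log (1-y) - (k/(2*T))/(1-y))
        (𝓝[>](-1:ℝ)) (𝓝 ((k*c - 2) * Real.log (1-(-1)) - (k/(2*T))/(1-(-1)))) := by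
      apply Tendsto.mono_left ?_ (nhdsWithin_le_nhds (s := Ioi (-1:ℝ)))
      apply ContinuousAt.tendsto
      fun_prop (disch := norm_num)
    have := t1.atBot_add t2
    refine this.congr' ?_
    filter_upwards [Ioo_mem_nhdsGT_of_mem (by norm_num : (-1:ℝ) ∈ Ico (-1:ℝ) 1)]
      with y hy
    rw [hEsplit y hy]; ring
  -- limits of the closed form
  have hform1 : Tendsto (fun y => C * Real.exp (E y)) (𝓝[<](1:ℝ)) (𝓝 0) := by
    have := (Real.tendsto_exp_atBot.comp hE1).const_mul C
    simpa using this
  have hform2 : Tendsto (fun y => C * Real.exp (E y)) (𝓝[>](-1:ℝ)) (𝓝 0) := by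
    have := (Real.tendsto_exp_atBot.comp hE2).const_mul C
    simpa using this
  have hlim1 : Tendsto ρ (𝓝[<](1:ℝ)) (𝓝 0) := by
    refine hform1.congr' ?_
    filter_upwards [Ioo_mem_nhdsLT_of_mem (by norm_num : (1:ℝ) ∈ Ioc (-1:ℝ) 1)]
      with y hy
    exact (hrho y hy).symm
  have hlim2 : Tendsto ρ (𝓝[>](-1:ℝ)) (𝓝 0) := by
    refine hform2.congr' ?_
    filter_upwards [Ioo_mem_nhdsGT_of_mem (by norm_num : (-1:ℝ) ∈ Ico (-1:ℝ) 1)]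
      with y hy
    exact (hrho y hy).symm
  -- continuous extension g
  set g : ℝ → ℝ := (Ioo (-1:ℝ) 1).indicator (fun y => C * Real.exp (E y)) with hg
  have hgIoo : ∀ y ∈ Ioo (-1:ℝ) 1, g y = C * Real.exp (E y) := by
    intro y hy; simp [hg, indicator_of_mem hy]
  have hformCont : ContinuousOn (fun y => C * Real.exp (E y)) (Ioo (-1:ℝ) 1) := by
    intro y hy
    obtain ⟨h1, h2⟩ := hy
    have hsq0 : (0:ℝ) < 1 - y^2 := by nlinarith
    have hsq : ((1:ℝ)-y^2)^2 ≠ 0 := by positivity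
    have hFc : ContinuousAt F y := (hasDerivFaux T G hT y ⟨h1,h2⟩).continuousAt
    apply ContinuousWithinAt.mono ?_ (subset_refl _)
    apply ContinuousAt.continuousWithinAt
    apply ContinuousAt.mul continuousAt_const
    apply Real.continuous_exp.continuousAt.comp
    apply ContinuousAt.sub (hFc.const_mul k)
    exact ContinuousAt.log (by fun_prop) hsq
  have hgCont : ContinuousOn g (Icc (-1:ℝ) 1) := by
    intro y hy
    rcases eq_or_ne y 1 with rfl | hy1
    · -- at 1
      have hval : g 1 = 0 := by simp [hg]
      rw [ContinuousWithinAt, hval]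
      have hIcc : Icc (-1:ℝ) 1 = Ico (-1:ℝ) 1 ∪ {1} := by
        rw [← Ico_union_right (by norm_num : (-1:ℝ) ≤ 1)]
      rw [hIcc, nhdsWithin_union]
      rw [tendsto_sup]
      constructor
      · have hle : 𝓝[Ico (-1:ℝ) 1] (1:ℝ) ≤ 𝓝[<](1:ℝ) :=
          nhdsWithin_mono _ (fun x hx => hx.2)
        refine (hform1.mono_left hle).congr' ?_
        have : Ioo (-1:ℝ) 1 ∈ 𝓝[Ico (-1:ℝ) 1] (1:ℝ) := by
          rw [mem_nhdsWithin]
          exact ⟨Ioi 0, isOpen_Ioi, by norm_num,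
            fun x hx => ⟨lt_trans (by norm_num) hx.1, hx.2.2⟩⟩
        filter_upwards [this] with x hx
        exact (hgIoo x hx).symm
      · rw [nhdsWithin_singleton, tendsto_pure_left]
        intro s hs
        simpa [hval] using mem_of_mem_nhds hs
    rcases eq_or_ne y (-1) with rfl | hy2
    · -- at -1
      have hval : g (-1) = 0 := by simp [hg]
      rw [ContinuousWithinAt, hval]
      have hIcc : Icc (-1:ℝ) 1 = {-1} ∪ Ioc (-1:ℝ) 1 := by
        rw [← Icc_union_Ioc_eq_Icc (le_refl (-1:ℝ)) (by norm_num : (-1:ℝ) ≤ 1), Icc_self]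
      rw [hIcc, nhdsWithin_union]
      rw [tendsto_sup]
      constructor
      · rw [nhdsWithin_singleton, tendsto_pure_left]
        intro s hs
        simpa [hval] using mem_of_mem_nhds hs
      · have hle : 𝓝[Ioc (-1:ℝ) 1] (-1:ℝ) ≤ 𝓝[>](-1:ℝ) :=
          nhdsWithin_mono _ (fun x hx => hx.1)
        refine (hform2.mono_left hle).congr' ?_
        have : Ioo (-1:ℝ) 1 ∈ 𝓝[Ioc (-1:ℝ) 1] (-1:ℝ) := by
          rw [mem_nhdsWithin]
          exact ⟨Iio 0, isOpen_Iio, by norm_num,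
            fun x hx => ⟨hx.2.1, lt_trans hx.1 (by norm_num)⟩⟩
        filter_upwards [this] with x hx
        exact (hgIoo x hx).symm
    · -- interior
      have hyIoo : y ∈ Ioo (-1:ℝ) 1 := ⟨lt_of_le_of_ne hy.1 (Ne.symm hy2), lt_of_le_of_ne hy.2 hy1⟩
      apply ContinuousAt.continuousWithinAt
      have heq : g =ᶠ[𝓝 y] (fun y => C * Real.exp (E y)) := by
        filter_upwards [isOpen_Ioo.mem_nhds hyIoo] with x hx
        exact hgIoo x hx
      exact ((hformCont y hyIoo).continuousAt (isOpen_Ioo.mem_nhds hyIoo)).congr heq.symm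
  -- boundedness
  obtain ⟨M, hM⟩ := isCompact_Icc.exists_bound_of_continuousOn hgCont
  have hbound : ∀ y ∈ Ioo (-1:ℝ) 1, |ρ y| ≤ M := by
    intro y hy
    have := hM y (Ioo_subset_Icc_self hy)
    rw [Real.norm_eq_abs] at this
    rwa [hrho y hy, ← hgIoo y hy]
  -- integrability
  have hInt : IntegrableOn ρ (Ioo (-1:ℝ) 1) := by
    have h1 : IntegrableOn g (Icc (-1:ℝ) 1) := hgCont.integrableOn_Icc
    have h2 : IntegrableOn g (Ioo (-1:ℝ) 1) := h1.mono_set Ioo_subset_Icc_self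
    refine h2.congr_fun ?_ measurableSet_Ioo
    intro y hy
    rw [hgIoo y hy, hrho y hy]
  exact ⟨hlim1, hlim2, ⟨M, hbound⟩, hInt⟩
end
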